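/- Let S be compact with ∂S ≠ ∅, let A be a closed set with ℵ ⊂ A ⊂ S for a finite set ℵ with d_H(ℵ,S) = ε, and suppose S ⊖ kεB(0,1) ⊂ A ⊂ S for some constant k ≥ 1. Then d_H(∂S, ∂A) ≤ kε. -/

import Mathlib

open MeasureTheory Metric Set Filter

noncomputable section

/-- The open finite cone with vertex `x`, axis `ξ`, opening angle `ρ` and height `h`. -/
def fcone (d : ℕ) (ρ h : ℝ) (x ξ : EuclideanSpace ℝ (Fin d)) :
    Set (EuclideanSpace ℝ (Fin d)) :=
  {z | z ≠ x ∧ (inner ℝ ξ (‖z - x‖⁻¹ • (z - x)) : ℝ) > Real.cos (ρ / 2)} ∩ Metric.ball x h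

/-- `S` is `ρ,h`-cone-convex. -/
def ConeConvex (d : ℕ) (ρ h : ℝ) (S : Set (EuclideanSpace ℝ (Fin d))) : Prop :=
  ∀ x ∈ frontier S, ∃ ξ : EuclideanSpace ℝ (Fin d), ‖ξ‖ = 1 ∧ fcone d ρ h x ξ ⊆ Sᶜ

/-- The `ρ,h`-cone-convex hull by complement. -/
def cccHull (d : ℕ) (ρ h : ℝ) (S : Set (EuclideanSpace ℝ (Fin d))) :
    Set (EuclideanSpace ℝ (Fin d)) :=
  ⋂₀ {A | ∃ y ξ : EuclideanSpace ℝ (Fin d),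
      ‖ξ‖ = 1 ∧ fcone d ρ h y ξ ∩ S = ∅ ∧ A = (fcone d ρ h y ξ)ᶜ}

/-- The `ρ,h`-cone-convex hull: intersection of all compact `ρ,h`-cone-convex supersets. -/
def ccHull (d : ℕ) (ρ h : ℝ) (S : Set (EuclideanSpace ℝ (Fin d))) :
    Set (EuclideanSpace ℝ (Fin d)) :=
  ⋂₀ {B | S ⊆ B ∧ IsCompact B ∧ B.Nonempty ∧ ConeConvex d ρ h B}

/-!
A point of `∂S` lies within `ε` of a sample point in `A`, and the segment joining them crosses
`∂A`. A point of `∂A` is not interior to the eroded set `S ⊖ kεB(0,1)`, so balls of radius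
slightly larger than `kε` around it leave `S`, and the segment to a point outside `S` crosses `∂S`.
-/

theorem IsPreconnected.inter_frontier_nonempty {X : Type*} [TopologicalSpace X] {t s : Set X}
    (ht : IsPreconnected t) (hts : (t ∩ s).Nonempty) (hts' : (t \ s).Nonempty) :
    (t ∩ frontier s).Nonempty := by
  by_contra h
  have hcover : t ⊆ interior s ∪ (closure s)ᶜ := fun x hx => by
    by_contra hx'
    simp only [mem_union, mem_compl_iff, not_or, not_not] at hx'
    exact h ⟨x, hx, hx'.2, hx'.1⟩
  rcases ht.subset_or_subset isOpen_interior isClosed_closure.isOpen_compl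
      (disjoint_compl_right_iff_subset.mpr interior_subset_closure) hcover with hsub | hsub
  · obtain ⟨x, hxt, hxs⟩ := hts'
    exact hxs (interior_subset (hsub hxt))
  · obtain ⟨x, hxt, hxs⟩ := hts
    exact hsub hxt (subset_closure hxs)

section Normed

variable {E : Type*} [NormedAddCommGroup E] [NormedSpace ℝ E]

theorem infDist_frontier_le_dist {T : Set E} {a b : E} (ha : a ∈ T) (hb : b ∉ T) :
    infDist a (frontier T) ≤ dist a b := by
  obtain ⟨p, hp, hpT⟩ := (convex_segment a b).isPreconnected.inter_frontier_nonempty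
    ⟨a, left_mem_segment ℝ a b, ha⟩ ⟨b, right_mem_segment ℝ a b, hb⟩
  calc infDist a (frontier T) ≤ dist a p := infDist_le_dist_of_mem hpT
    _ ≤ dist a b := by rw [dist_comm]; exact segment_subset_closedBall_left a b hp

theorem infDist_frontier_le_infDist {A N : Set E} {x : E} (hx : x ∉ interior A)
    (hNA : N ⊆ A) (hN : N.Nonempty) : infDist x (frontier A) ≤ infDist x N := by
  refine (le_infDist hN).2 fun n hn => ?_
  by_cases hxA : x ∈ A
  · rw [infDist_zero_of_mem (show x ∈ frontier A from ⟨subset_closure hxA, hx⟩)]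
    exact dist_nonneg
  · rw [← frontier_compl]
    exact infDist_frontier_le_dist hxA (not_not.2 (hNA hn))

theorem infDist_frontier_le_of_notMem_interior_erosion {S : Set E} {x : E} {r : ℝ} (hr : 0 ≤ r)
    (hxS : x ∈ S) (hx : x ∉ interior {y ∈ S | closedBall y r ⊆ S}) :
    infDist x (frontier S) ≤ r := by
  refine le_of_forall_pos_le_add fun δ hδ => ?_
  have hleave : ¬ ball x (r + δ) ⊆ S := fun hball => hx <| mem_interior.2
    ⟨ball x δ, fun y hy => ⟨hball (ball_subset_ball (by linarith) hy),
      (closedBall_subset_ball' (by rw [mem_ball] at hy; linarith)).trans hball⟩,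
      isOpen_ball, mem_ball_self hδ⟩
  obtain ⟨z, hz, hzS⟩ := not_subset.1 hleave
  exact (infDist_frontier_le_dist hxS hzS).trans (mem_ball'.1 hz).le

end Normed

theorem stmt_14_general {d : ℕ} (S A N : Set (EuclideanSpace ℝ (Fin d)))
    (hS : IsCompact S) (hA : IsClosed A)
    (hN : N.Finite) (hNne : N.Nonempty) (hNA : N ⊆ A) (hAS : A ⊆ S)
    (ε k : ℝ) (hε : ε = Metric.hausdorffDist N S) (hk : 1 ≤ k)
    (hero : {x ∈ S | Metric.closedBall x (k * ε) ⊆ S} ⊆ A) :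
    Metric.hausdorffDist (frontier S) (frontier A) ≤ k * ε := by
  have hε0 : 0 ≤ ε := hε ▸ hausdorffDist_nonneg
  have hεkε : ε ≤ k * ε := le_mul_of_one_le_left hε0 hk
  have hfin : hausdorffEDist S N ≠ ⊤ := hausdorffEDist_ne_top_of_nonempty_of_bounded
    (hNne.mono (hNA.trans hAS)) hNne hS.isBounded hN.isBounded
  apply hausdorffDist_le_of_infDist (hε0.trans hεkε)
  · intro x hx
    have hxS : x ∈ S := hS.isClosed.frontier_subset hx
    calc infDist x (frontier A) ≤ infDist x N :=
          infDist_frontier_le_infDist (fun hxA => hx.2 (interior_mono hAS hxA)) hNA hNne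
      _ ≤ ε := by rw [hε, hausdorffDist_comm]; exact infDist_le_hausdorffDist_of_mem hxS hfin
      _ ≤ k * ε := hεkε
  · intro x hx
    exact infDist_frontier_le_of_notMem_interior_erosion (hε0.trans hεkε)
      (hAS (hA.frontier_subset hx)) fun hxE => hx.2 (interior_mono hero hxE)

theorem stmt_14 {d : ℕ} (S A N : Set (EuclideanSpace ℝ (Fin d)))
    (hS : IsCompact S) (hfr : (frontier S).Nonempty) (hA : IsClosed A)
    (hN : N.Finite) (hNne : N.Nonempty) (hNA : N ⊆ A) (hAS : A ⊆ S)
    (ε k : ℝ) (hε : ε = Metric.hausdorffDist N S) (hk : 1 ≤ k)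
    (hero : {x ∈ S | Metric.closedBall x (k * ε) ⊆ S} ⊆ A) :
    Metric.hausdorffDist (frontier S) (frontier A) ≤ k * ε :=
  stmt_14_general S A N hS hA hN hNne hNA hAS ε k hε hk hero
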